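/- For every integer m ≥ 1, N^1_2(m) = m − 1; that is, every ADS^1_2(m)-sequence has at most m − 1 distinct symbols, and for every m ≥ 2 there exists an ADS^1_2(m)-sequence with exactly m − 1 distinct symbols. -/

import Mathlib

/-- The alternating list `a b a b ...` of length `l`. -/
def altList (a b : ℕ) : ℕ → List ℕ
  | 0 => []
  | l + 1 => a :: altList b a l

/-- `S` contains an alternation of length `l`: two distinct symbols occur as an
alternating (not necessarily contiguous) subsequence of length `l`. -/
def HasAlt (S : List ℕ) (l : ℕ) : Prop :=
  ∃ a b : ℕ, a ≠ b ∧ (altList a b l).Sublist S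

/-- A Davenport–Schinzel sequence of order `s`: no two adjacent equal entries and
no alternation of length `s + 2`. -/
def IsDS (s : ℕ) (S : List ℕ) : Prop :=
  List.Chain' (· ≠ ·) S ∧ ¬ HasAlt S (s + 2)

/-- `S` can be partitioned into at most `m` contiguous blocks, each consisting of
pairwise distinct symbols. -/
def HasBlocks (S : List ℕ) (m : ℕ) : Prop :=
  ∃ Bs : List (List ℕ), Bs.length ≤ m ∧ S = Bs.flatten ∧ ∀ B ∈ Bs, B.Nodup

/-- `λ_s(n)`: maximum length of a Davenport–Schinzel sequence of order `s`
using at most `n` distinct symbols. -/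
noncomputable def lambdaDS (s n : ℕ) : ℕ :=
  sSup {L | ∃ S : List ℕ, IsDS s S ∧ S.toFinset.card ≤ n ∧ S.length = L}

/-- `ψ_s(m,n)`: maximum length of a Davenport–Schinzel sequence of order `s` on at
most `n` distinct symbols partitionable into at most `m` blocks of distinct symbols. -/
noncomputable def psiDS (s m n : ℕ) : ℕ :=
  sSup {L | ∃ S : List ℕ, IsDS s S ∧ S.toFinset.card ≤ n ∧ HasBlocks S m ∧ S.length = L}

/-- The Ackermann hierarchy: `A_1(n) = 2n`, and `A_k(n) = A_{k-1}^{(n)}(1)` for `k ≥ 2`. -/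
def Ak : ℕ → ℕ → ℕ
  | 0, n => n + 1
  | 1, n => 2 * n
  | k + 2, n => (Ak (k + 1))^[n] 1

/-- The Ackermann function `A(n) = A_n(3)`. -/
def AckF (n : ℕ) : ℕ := Ak n 3

/-- `α_k(x) = min {n | A_k(n) ≥ x}`. -/
noncomputable def invAk (k x : ℕ) : ℕ := sInf {n | x ≤ Ak k n}

/-- `α(x) = min {n | A(n) ≥ x}`. -/
noncomputable def invA (x : ℕ) : ℕ := sInf {n | x ≤ AckF n}

/-- An `ADS^s_k(m)`-sequence: at most `m` blocks of distinct symbols, every occurring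
symbol appears at least `k` times, and no alternation of length `s + 2`. -/
def IsADS (s k m : ℕ) (S : List ℕ) : Prop :=
  HasBlocks S m ∧ (∀ a ∈ S, k ≤ S.count a) ∧ ¬ HasAlt S (s + 2)

/-- `N^s_k(m)`: the supremum (possibly infinite) of the number of distinct symbols
in an `ADS^s_k(m)`-sequence. -/
noncomputable def NADS (s k m : ℕ) : ℕ∞ :=
  sSup {c : ℕ∞ | ∃ S : List ℕ, IsADS s k m S ∧ c = (S.toFinset.card : ℕ∞)}

/-- `S` is `r`-sparse: any at most `r` consecutive entries are pairwise distinct. -/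
def Sparse (r : ℕ) (S : List ℕ) : Prop :=
  ∀ l : List ℕ, l <:+: S → l.length ≤ r → l.Nodup

/-- `S` contains the pattern `u`: some subsequence of `S` is an injectively renamed
copy of `u`. -/
def ContainsPat (S u : List ℕ) : Prop :=
  ∃ f : ℕ → ℕ, Set.InjOn f {a | a ∈ u} ∧ (u.map f).Sublist S

/-- `Ex_u(n)`: maximum length of an `r`-sparse `u`-free sequence on at most `n`
distinct symbols, where `r` is the number of distinct symbols of `u`. -/
noncomputable def ExDS (u : List ℕ) (n : ℕ) : ℕ :=
  sSup {L | ∃ S : List ℕ, Sparse u.toFinset.card S ∧ ¬ ContainsPat S u ∧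
    S.toFinset.card ≤ n ∧ S.length = L}

/-- An `(r,s)`-formation: a concatenation of `s` permutations of a single set of
`r` distinct symbols. -/
def IsFormation (r s : ℕ) (F : List ℕ) : Prop :=
  ∃ A : Finset ℕ, A.card = r ∧ ∃ Bs : List (List ℕ), Bs.length = s ∧
    (∀ B ∈ Bs, B.Nodup ∧ B.toFinset = A) ∧ F = Bs.flatten

/-- An `(r,s)`-formation-free sequence: `r`-sparse and containing no
`(r,s)`-formation as a subsequence. -/
def FormationFree (r s : ℕ) (S : List ℕ) : Prop :=
  Sparse r S ∧ ¬ ∃ F : List ℕ, IsFormation r s F ∧ F.Sublist S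

/-- `F_{r,s}(n)`: maximum length of an `(r,s)`-formation-free sequence on at most
`n` distinct symbols. -/
noncomputable def FDS (r s n : ℕ) : ℕ :=
  sSup {L | ∃ S : List ℕ, FormationFree r s S ∧ S.toFinset.card ≤ n ∧ S.length = L}

/-!
Without an alternation `a b a`, the occurrences of each symbol form a single contiguous run, so
every symbol occurring at least twice contributes its own adjacent equal pair `a a`. A block of
distinct symbols contains no such pair, so they all sit at the at most `m - 1` block interfaces.
The bound is attained by the sorted sequence `0 0 1 1 ⋯ (n-1) (n-1)`, cut into the `n + 1` blocks
`[0], [0, 1], …, [n-2, n-1], [n-1]`.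
-/

theorem HasAlt.mono {S T : List ℕ} {l : ℕ} (h : HasAlt S l) (hST : S.Sublist T) :
    HasAlt T l :=
  let ⟨a, b, hab, hsub⟩ := h
  ⟨a, b, hab, hsub.trans hST⟩

theorem not_hasAlt_three_of_pairwise_le {S : List ℕ} (h : S.Pairwise (· ≤ ·)) :
    ¬ HasAlt S 3 := by
  rintro ⟨a, b, hab, hsub⟩
  have hsorted : [a, b, a].Pairwise (· ≤ ·) := h.sublist hsub
  simp only [List.pairwise_cons, List.mem_cons, List.not_mem_nil] at hsorted
  have : a ≤ b ∧ b ≤ a := ⟨hsorted.1 b (by simp), hsorted.2.1 a (by simp)⟩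
  omega

section AdjEq

variable {α : Type*} [DecidableEq α]

def numAdjEq : List α → ℕ
  | a :: b :: t => (if a = b then 1 else 0) + numAdjEq (b :: t)
  | _ => 0

theorem numAdjEq_eq_zero_of_nodup : ∀ {S : List α}, S.Nodup → numAdjEq S = 0
  | [], _ | [_], _ => rfl
  | a :: b :: t, h => by
    have hab : a ≠ b := fun hab => (List.nodup_cons.mp h).1 (hab ▸ List.mem_cons_self)
    simp [numAdjEq, hab, numAdjEq_eq_zero_of_nodup h.of_cons]

theorem numAdjEq_append_le :
    ∀ A B : List α, numAdjEq (A ++ B) ≤ numAdjEq A + numAdjEq B + 1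
  | [], B => by simp [numAdjEq]
  | [a], [] => by simp [numAdjEq]
  | [a], b :: B => by simp only [List.singleton_append, numAdjEq]; split <;> omega
  | a :: b :: A, B => by
    have ih := numAdjEq_append_le (b :: A) B
    simp only [List.cons_append, numAdjEq] at ih ⊢
    omega

theorem numAdjEq_flatten_le :
    ∀ {Bs : List (List α)}, (∀ B ∈ Bs, B.Nodup) → numAdjEq Bs.flatten ≤ Bs.length - 1
  | [], _ => by simp [numAdjEq]
  | [B], h => by simp [numAdjEq_eq_zero_of_nodup (h B (by simp))]
  | B :: B' :: Bs, h => by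
    have ih := numAdjEq_flatten_le (Bs := B' :: Bs) fun C hC => h C (List.mem_cons_of_mem B hC)
    have hB := numAdjEq_eq_zero_of_nodup (h B List.mem_cons_self)
    have happ := numAdjEq_append_le B (B' :: Bs).flatten
    simp only [List.flatten_cons, List.length_cons] at ih happ ⊢
    omega

end AdjEq

theorem card_filter_two_le_count_le_numAdjEq :
    ∀ {S : List ℕ}, ¬ HasAlt S 3 →
      {a ∈ S.toFinset | 2 ≤ S.count a}.card ≤ numAdjEq S
  | [], _ => by simp
  | [x], _ => by simp [numAdjEq]
  | x :: y :: T, h => by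
    have ih := card_filter_two_le_count_le_numAdjEq
      fun hT => h (hT.mono (List.sublist_cons_self x (y :: T)))
    by_cases hxy : x = y
    · subst hxy
      -- only `x` can gain a second occurrence
      have hsub : {a ∈ (x :: x :: T).toFinset | 2 ≤ (x :: x :: T).count a} ⊆
          insert x {a ∈ (x :: T).toFinset | 2 ≤ (x :: T).count a} := by
        intro a ha
        by_cases hax : a = x
        · simp [hax]
        · simpa [List.count_cons_of_ne (Ne.symm hax), hax] using ha
      have := (Finset.card_le_card hsub).trans (Finset.card_insert_le _ _)
      simp only [numAdjEq, if_true]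
      omega
    · -- an `x` after the `y` would create the alternation `x y x`
      have hx : x ∉ y :: T := by
        rintro (_ | ⟨_, hxT⟩)
        · exact hxy rfl
        · exact h ⟨x, y, hxy, (List.singleton_sublist.mpr hxT).cons_cons y |>.cons_cons x⟩
      have hsub : {a ∈ (x :: y :: T).toFinset | 2 ≤ (x :: y :: T).count a} ⊆
          {a ∈ (y :: T).toFinset | 2 ≤ (y :: T).count a} := by
        intro a ha
        have hax : a ≠ x := by
          rintro rfl
          simp [List.count_eq_zero_of_not_mem hx] at ha
        simpa [List.count_cons_of_ne (Ne.symm hax), hax] using ha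
      simpa [numAdjEq, hxy] using (Finset.card_le_card hsub).trans ih

theorem IsADS.card_toFinset_le {m : ℕ} {S : List ℕ} (h : IsADS 1 2 m S) :
    S.toFinset.card ≤ m - 1 := by
  obtain ⟨⟨Bs, hlen, hS, hBs⟩, hcount, halt⟩ := h
  calc S.toFinset.card = {a ∈ S.toFinset | 2 ≤ S.count a}.card := by
        rw [Finset.filter_true_of_mem fun a ha => hcount a (List.mem_toFinset.mp ha)]
    _ ≤ numAdjEq S := card_filter_two_le_count_le_numAdjEq halt
    _ ≤ Bs.length - 1 := hS ▸ numAdjEq_flatten_le hBs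
    _ ≤ m - 1 := by omega

def doubledRange (n : ℕ) : List ℕ := (List.range n).flatMap fun i => [i, i]

theorem mem_doubledRange {n a : ℕ} : a ∈ doubledRange n ↔ a < n := by
  simp [doubledRange]

theorem doubledRange_succ (n : ℕ) : doubledRange (n + 1) = doubledRange n ++ [n, n] := by
  simp [doubledRange, List.range_succ]

theorem count_doubledRange {n a : ℕ} (ha : a < n) : (doubledRange n).count a = 2 := by
  induction n with
  | zero => omega
  | succ n ih =>
    rw [doubledRange_succ, List.count_append]
    rcases (Nat.lt_succ_iff.mp ha).lt_or_eq with ha | rfl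
    · simp [ih ha, List.count_cons_of_ne ha.ne']
    · simp [List.count_eq_zero_of_not_mem (mt mem_doubledRange.mp (lt_irrefl _))]

theorem pairwise_le_doubledRange (n : ℕ) : (doubledRange n).Pairwise (· ≤ ·) := by
  simp only [doubledRange, List.pairwise_flatMap]
  refine ⟨fun i _ => by simp, (List.pairwise_lt_range).imp ?_⟩
  simp +contextual [le_of_lt]

theorem doubledRange_succ_eq_flatten (n : ℕ) :
    doubledRange (n + 1) = ([0] :: (List.range n).map (fun i => [i, i + 1]) ++ [[n]]).flatten := by
  induction n with
  | zero => rfl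
  | succ n ih =>
    rw [doubledRange_succ, ih, List.range_succ]
    simp

theorem hasBlocks_doubledRange : ∀ n, HasBlocks (doubledRange n) (n + 1)
  | 0 => ⟨[], by simp, rfl, by simp⟩
  | n + 1 => ⟨_, by simp, doubledRange_succ_eq_flatten n, by
      simp +contextual [or_imp, forall_exists_index]⟩

theorem isADS_doubledRange (n : ℕ) : IsADS 1 2 (n + 1) (doubledRange n) :=
  ⟨hasBlocks_doubledRange n,
    fun _ ha => (count_doubledRange (mem_doubledRange.mp ha)).ge,
    not_hasAlt_three_of_pairwise_le (pairwise_le_doubledRange n)⟩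

theorem card_toFinset_doubledRange (n : ℕ) : (doubledRange n).toFinset.card = n := by
  rw [show (doubledRange n).toFinset = Finset.range n from
    Finset.ext fun _ => by simp [mem_doubledRange], Finset.card_range]

/-- `N^1_2(m) = m − 1`: every `ADS^1_2(m)`-sequence has at most `m − 1` distinct symbols,
and for `m ≥ 2` some `ADS^1_2(m)`-sequence has exactly `m − 1` distinct symbols. -/
theorem NADS_one_two :
    ∀ m : ℕ, 1 ≤ m →
      NADS 1 2 m = ((m - 1 : ℕ) : ℕ∞) ∧
      (2 ≤ m → ∃ S : List ℕ, IsADS 1 2 m S ∧ S.toFinset.card = m - 1) := by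
  intro m hm
  obtain ⟨n, rfl⟩ : ∃ n, m = n + 1 := ⟨m - 1, by omega⟩
  have hex : ∃ S : List ℕ, IsADS 1 2 (n + 1) S ∧ S.toFinset.card = n + 1 - 1 :=
    ⟨doubledRange n, isADS_doubledRange n, card_toFinset_doubledRange n⟩
  refine ⟨le_antisymm ?_ ?_, fun _ => hex⟩
  · refine sSup_le ?_
    rintro _ ⟨S, hS, rfl⟩
    exact_mod_cast hS.card_toFinset_le
  · obtain ⟨S, hS, hcard⟩ := hex
    exact le_sSup ⟨S, hS, by rw [hcard]⟩
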